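/- Fix an integer N ≥ 2 and a probability vector p on Fin 2 with p 0 ≥ p 1 and p 1 > 0. For an integer c ≥ 2, let R(p,c) = 1 - (N/(2·(N-1))) · VI₂(p, u_c) denote the Rand index between the ground truth and a statistically independent balanced candidate partition with c clusters, where u_c is the uniform probability vector on Fin c. Then: (1) if p 0 > 1/2, then R(p,·) is strictly decreasing in c; (2) if p 0 = 1/2, then R(p,·) is constant in c. -/
import Mathlib


/-- The quadratic entropy of a finitely supported probability vector. -/
noncomputable def quadEntropy {α : Type*} [Fintype α] (x : α → ℝ) : ℝ :=
  2 * (1 - ∑ i, (x i) ^ 2)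

/-- The quadratic variation of information between (the distributions of)
two statistically independent partitions. -/
noncomputable def VI2 {α β : Type*} [Fintype α] [Fintype β] (p : α → ℝ) (q : β → ℝ) : ℝ :=
  2 * quadEntropy (fun ij : α × β => p ij.1 * q ij.2) - quadEntropy p - quadEntropy q

/-- The uniform (balanced) probability vector on `Fin c`. -/
noncomputable def unif (c : ℕ) : Fin c → ℝ := fun _ => 1 / (c : ℝ)

/-- The (expected) Rand index between a ground-truth distribution `p` and a
statistically independent balanced candidate partition with `c` clusters. -/
noncomputable def randGT (N : ℕ) {r : ℕ} (p : Fin r → ℝ) (c : ℕ) : ℝ :=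
  1 - ((N : ℝ) / (2 * ((N : ℝ) - 1))) * VI2 p (unif c)

lemma VI2_unif_two (p : Fin 2 → ℝ) {c : ℕ} (hc : 0 < c) :
    VI2 p (unif c) = 2 * (p 0 ^ 2 + p 1 ^ 2)
      + (2 - 4 * (p 0 ^ 2 + p 1 ^ 2)) / (c : ℝ) := by
  have hc0 : (c : ℝ) ≠ 0 := by positivity
  unfold VI2 quadEntropy unif
  rw [Fintype.sum_prod_type]
  simp only [Fin.sum_univ_two, mul_pow, ← Finset.sum_mul, Finset.sum_const,
    Finset.card_univ, Fintype.card_fin, nsmul_eq_mul]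
  field_simp
  ring

lemma randGT_eval {N : ℕ} (p : Fin 2 → ℝ) {c : ℕ} (hc : 0 < c) :
    randGT N p c = 1 - ((N : ℝ) / (2 * ((N : ℝ) - 1))) *
      (2 * (p 0 ^ 2 + p 1 ^ 2) + (2 - 4 * (p 0 ^ 2 + p 1 ^ 2)) / (c : ℝ)) := by
  rw [randGT, VI2_unif_two p hc]

theorem randGT_bias_two_clusters {N : ℕ} (hN : 2 ≤ N)
    (p : Fin 2 → ℝ) (hp1 : ∑ i, p i = 1) (hord : p 1 ≤ p 0) (hpos : 0 < p 1) :
    ((1 : ℝ) / 2 < p 0 →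
      ∀ c c' : ℕ, 2 ≤ c → c < c' → randGT N p c' < randGT N p c) ∧
    (p 0 = (1 : ℝ) / 2 →
      ∀ c c' : ℕ, 2 ≤ c → 2 ≤ c' → randGT N p c = randGT N p c') := by
  have hsum : p 0 + p 1 = 1 := by simpa [Fin.sum_univ_two] using hp1
  have hN1 : (1 : ℝ) ≤ (N : ℝ) - 1 := by
    have : (2 : ℝ) ≤ (N : ℝ) := by exact_mod_cast hN
    linarith
  have hK : 0 < (N : ℝ) / (2 * ((N : ℝ) - 1)) := by
    apply div_pos <;> nlinarith
  constructor
  · intro hp0 c c' hc hcc'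
    have hc0 : 0 < c := by omega
    have hc'0 : 0 < c' := by omega
    rw [randGT_eval p hc0, randGT_eval p hc'0]
    have hS : 0 < 2 - 4 * (p 0 ^ 2 + p 1 ^ 2) → False := by
      intro h
      nlinarith [sq_nonneg (p 0 - p 1)]
    have hSpos : 4 * (p 0 ^ 2 + p 1 ^ 2) - 2 > 0 := by
      nlinarith [sq_nonneg (p 0 - p 1)]
    have hlt : (1 : ℝ) / (c' : ℝ) < 1 / (c : ℝ) := by
      apply one_div_lt_one_div_of_lt
      · exact_mod_cast hc0
      · exact_mod_cast hcc'
    have hcR : (0:ℝ) < c := by exact_mod_cast hc0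
    have hc'R : (0:ℝ) < c' := by exact_mod_cast hc'0
    have key : (2 - 4 * (p 0 ^ 2 + p 1 ^ 2)) / (c' : ℝ)
        > (2 - 4 * (p 0 ^ 2 + p 1 ^ 2)) / (c : ℝ) := by
      have hneg : 2 - 4 * (p 0 ^ 2 + p 1 ^ 2) < 0 := by linarith
      have hccR : (c : ℝ) < c' := by exact_mod_cast hcc'
      rw [gt_iff_lt, div_lt_div_iff₀ hcR hc'R]
      nlinarith
    nlinarith [mul_lt_mul_of_pos_left key hK]
  · intro hp0 c c' hc hc'
    have hp1' : p 1 = 1 / 2 := by linarith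
    have hc0 : 0 < c := by omega
    have hc'0 : 0 < c' := by omega
    rw [randGT_eval p hc0, randGT_eval p hc'0, hp0, hp1']
    norm_num
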